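/- Fix positive integers N and D, a finite set X ⊆ [0,1), and a function g : A_N(D) → ℂ. Then there are at most finitely many functions f : ℝ² → ℂ such that: f is a bivariate exponential polynomial with at most N terms, pairwise distinct frequencies in [0,1)², and nonzero polynomial coefficients of degree < D; the projection of the frequency set of f onto the first coordinate equals X; and f(m, n) = g(m, n) for all (m, n) ∈ A_N(D). -/

import Mathlib

/-- The sampling set `A_N(D) = ⋃_{r=1}^{N} [2⌊N/r⌋D]₀ × [2rD]₀ ⊆ ℤ²`
(represented as a finite set of pairs of natural numbers). -/
def sampSet (N D : ℕ) : Finset (ℕ × ℕ) :=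
  (Finset.Icc 1 N).biUnion fun r =>
    Finset.range (2 * (N / r) * D + 1) ×ˢ Finset.range (2 * r * D + 1)

/-- `f : ℝ² → ℂ` is a bivariate exponential polynomial with at most `N` terms, (pairwise
distinct) frequencies given by the finite set `V ⊆ [0,1)²`, and nonzero polynomial coefficients
in which every variable appears with exponent `< D`:
`f(ξ,η) = ∑_{(x,y) ∈ V} p_{(x,y)}(ξ,η) e^{2πi (xξ + yη)}`. -/
def IsExpPoly2 (N D : ℕ) (f : ℝ → ℝ → ℂ) (V : Finset (ℝ × ℝ)) : Prop :=
  ∃ p : ℝ × ℝ → MvPolynomial (Fin 2) ℂ,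
    V.card ≤ N ∧
    (∀ v ∈ V, v.1 ∈ Set.Ico (0 : ℝ) 1 ∧ v.2 ∈ Set.Ico (0 : ℝ) 1) ∧
    (∀ v ∈ V, p v ≠ 0) ∧
    (∀ v ∈ V, ∀ i : Fin 2, (p v).degreeOf i < D) ∧
    ∀ ξ η : ℝ, f ξ η = ∑ v ∈ V, MvPolynomial.eval ![(ξ : ℂ), (η : ℂ)] (p v) *
      Complex.exp (2 * Real.pi * Complex.I * (v.1 * ξ + v.2 * η))


/-!
Two such functions that agree on `A_N(D)` are equal, so the set has at most one element. Their
difference is `∑_{v ∈ W} P_v(ξ, η) e(v₁ξ + v₂η)` with at most `2N` frequencies `v`, and every `P_v`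
vanishes. Choose a value `a` of the first coordinate whose fiber has the least number `t` of
frequencies, and put `r = ⌈t/2⌉`; counting fibers shows that there are at most `2⌊N/r⌋` values of
the first coordinate. A univariate exponential polynomial with `k` frequencies and coefficients of
degree `< D` that vanishes at `0, …, kD - 1` is zero. So the rows of the rectangle
`[2⌊N/r⌋D]₀ × [2rD]₀ ⊆ A_N(D)` separate the fibers, and then its columns separate the `t ≤ 2r`
frequencies over `a`. Remove that fiber and induct.
-/

open Finset
open scoped Polynomial

namespace Polynomial

variable {R : Type*} [CommRing R]

theorem degree_taylor_sub_lt (r : R) {q : R[X]} {k : ℕ} (hq : q.degree < ↑(k + 1)) :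
    (taylor r q - q).degree < k := by
  rcases eq_or_ne q 0 with rfl | hq0
  · simp
  rw [degree_eq_natDegree hq0, Nat.cast_lt, Nat.lt_succ_iff] at hq
  calc (taylor r q - q).degree < (taylor r q).degree :=
        degree_sub_lt_left (degree_taylor q r) ((taylor_eq_zero r q).not.mpr hq0)
          (leadingCoeff_taylor r q)
    _ = q.degree := degree_taylor q r
    _ ≤ k := degree_le_natDegree.trans (by exact_mod_cast hq)

theorem eq_zero_of_smul_taylor_eq_smul [IsDomain R] {a b : R} (hab : a ≠ b) {r : R} {q : R[X]}
    (h : a • taylor r q = b • q) : q = 0 := by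
  by_contra hq
  have hcoeff := congrArg (coeff · q.natDegree) h
  simp only [coeff_smul, coeff_taylor_natDegree, coeff_natDegree, smul_eq_mul] at hcoeff
  exact hab (mul_right_cancel₀ (leadingCoeff_ne_zero.mpr hq) hcoeff)

theorem eval_smul_taylor_one_sub_smul_mul_pow (a b : R) (q : R[X]) (n : ℕ) :
    (a • taylor 1 q - b • q).eval (n : R) * a ^ n =
      q.eval ((n + 1 : ℕ) : R) * a ^ (n + 1) - b * (q.eval (n : R) * a ^ n) := by
  simp only [eval_sub, eval_smul, taylor_eval, smul_eq_mul]
  push_cast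
  ring

theorem eq_zero_of_sum_eval_mul_pow_eq_zero [IsDomain R] [CharZero R] {ι : Type*}
    [DecidableEq ι] {s : Finset ι} {z : ι → R} (hz : Set.InjOn z s) (hz0 : ∀ i ∈ s, z i ≠ 0)
    {d : ι → ℕ} {q : ι → R[X]} (hq : ∀ i ∈ s, (q i).degree < d i)
    (h : ∀ n < ∑ i ∈ s, d i, ∑ i ∈ s, (q i).eval (n : R) * z i ^ n = 0) :
    ∀ i ∈ s, q i = 0 := by
  obtain ⟨L, hL⟩ : ∃ L, ∑ i ∈ s, d i = L := ⟨_, rfl⟩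
  rw [hL] at h
  induction L generalizing d q with
  | zero =>
    intro i hi
    simpa [sum_eq_zero_iff.mp hL i hi] using hq i hi
  | succ L ih =>
    obtain ⟨i₀, hi₀, hd₀⟩ : ∃ i₀ ∈ s, d i₀ ≠ 0 := by
      by_contra! h0
      simp [sum_eq_zero h0] at hL
    obtain ⟨e, he⟩ := Nat.exists_eq_succ_of_ne_zero hd₀
    -- `q ↦ z i • taylor 1 q - z i₀ • q` lowers the degree of `q i₀` and no other degree, and
    -- turns the vanishing for `n < L + 1` into vanishing for `n < L`.
    have hq₁ : ∀ i ∈ s, z i • taylor 1 (q i) - z i₀ • q i = 0 := by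
      refine ih (d := Function.update d i₀ e) (fun i hi => ?_) (fun n hn => ?_) ?_
      · rcases eq_or_ne i i₀ with rfl | hne
        · rw [Function.update_self, ← smul_sub]
          exact (degree_smul_le _ _).trans_lt (degree_taylor_sub_lt 1 (he ▸ hq i hi :))
        · rw [Function.update_of_ne hne]
          refine (degree_sub_le _ _).trans_lt (max_lt ?_ ?_)
          · exact (degree_smul_le _ _).trans_lt (degree_taylor (q i) 1 ▸ hq i hi)
          · exact (degree_smul_le _ _).trans_lt (hq i hi)
      · simp only [eval_smul_taylor_one_sub_smul_mul_pow, sum_sub_distrib, ← mul_sum,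
          h (n + 1) (by omega), h n (by omega), mul_zero, sub_zero]
      · rw [sum_update_of_mem hi₀, sdiff_singleton_eq_erase]
        rw [← add_sum_erase s d hi₀, he] at hL
        omega
    have hq_ne : ∀ i ∈ s, i ≠ i₀ → q i = 0 := fun i hi hne =>
      eq_zero_of_smul_taylor_eq_smul (fun hzi => hne (hz hi hi₀ hzi)) (sub_eq_zero.mp (hq₁ i hi))
    have hroots : ∀ n : Fin (L + 1), (q i₀).eval ((n : ℕ) : R) = 0 := fun n => by
      have := h n n.isLt
      rw [sum_eq_single_of_mem i₀ hi₀ fun i hi hne => by simp [hq_ne i hi hne]] at this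
      exact (mul_eq_zero.mp this).resolve_right (pow_ne_zero _ (hz0 i₀ hi₀))
    intro i hi
    rcases eq_or_ne i i₀ with rfl | hne
    · by_contra h0
      refine h0 (eq_zero_of_natDegree_lt_card_of_eval_eq_zero _
        (fun a b hab => Fin.ext (Nat.cast_injective hab)) hroots ?_)
      rw [Fintype.card_fin, natDegree_lt_iff_degree_lt h0]
      exact (hq i hi).trans_le <| by
        exact_mod_cast hL ▸ single_le_sum (fun j _ => Nat.zero_le (d j)) hi
    · exact hq_ne i hi hne

theorem sum_filter_eq_zero_of_sum_eval_mul_pow_eq_zero [IsDomain R] [CharZero R]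
    [DecidableEq R] {ι : Type*} {s : Finset ι} {z : ι → R} (hz0 : ∀ i ∈ s, z i ≠ 0) {D : ℕ}
    {q : ι → R[X]} (hq : ∀ i ∈ s, (q i).degree < D)
    (h : ∀ n < #(s.image z) * D, ∑ i ∈ s, (q i).eval (n : R) * z i ^ n = 0) (a : R) :
    ∑ i ∈ s with z i = a, q i = 0 := by
  by_cases ha : a ∈ s.image z
  swap
  · exact sum_eq_zero fun i hi => absurd (mem_image_of_mem z (mem_filter.mp hi).1)
      ((mem_filter.mp hi).2 ▸ ha)
  refine eq_zero_of_sum_eval_mul_pow_eq_zero (s := s.image z) (z := id) (d := fun _ => D)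
    (q := fun b => ∑ i ∈ s with z i = b, q i)
    (Set.injOn_id _) (by simpa using hz0) (fun b _ => ?_) (fun n hn => ?_) a ha
  · exact mem_degreeLT.mp (sum_mem fun i hi => mem_degreeLT.mpr (hq i (mem_filter.mp hi).1))
  · rw [sum_const, smul_eq_mul] at hn
    rw [← h n hn, ← sum_fiberwise_of_maps_to (g := z) fun i hi => mem_image_of_mem z hi]
    refine sum_congr rfl fun b _ => ?_
    rw [eval_finsetSum, sum_mul]
    exact sum_congr rfl fun i hi => by rw [id, (mem_filter.mp hi).2]

end Polynomial

namespace MvPolynomial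

variable {R : Type*} [CommRing R]

theorem exists_natDegree_le_degreeOf_zero_eval_eq (P : MvPolynomial (Fin 2) R) (b : R) :
    ∃ Q : R[X], Q.natDegree ≤ P.degreeOf 0 ∧ ∀ a, Q.eval a = eval ![a, b] P := by
  refine ⟨(finSuccEquiv R 1 P).map (eval ![b]),
    Polynomial.natDegree_map_le.trans (natDegree_finSuccEquiv P).le, fun a => ?_⟩
  rw [Polynomial.eval_map, ← eval_C (σ := Fin 1) a, Polynomial.eval₂_at_apply,
    eval_polynomial_eval_finSuccEquiv, eval_C]
  rfl

theorem exists_natDegree_le_degreeOf_one_eval_eq (P : MvPolynomial (Fin 2) R) (a : R) :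
    ∃ Q : R[X], Q.natDegree ≤ P.degreeOf 1 ∧ ∀ b, Q.eval b = eval ![a, b] P := by
  obtain ⟨Q, hQ, hQP⟩ := (rename (Equiv.swap 0 1) P).exists_natDegree_le_degreeOf_zero_eval_eq a
  refine ⟨Q, hQ.trans_eq ?_, fun b => ?_⟩
  · simpa using degreeOf_rename_of_injective (Equiv.swap (0 : Fin 2) 1).injective 1 (p := P)
  · rw [hQP, eval_rename]
    congr 2
    funext i
    fin_cases i <;> rfl

theorem eq_zero_of_eval_natCast_eq_zero [IsDomain R] [CharZero R] {P : MvPolynomial (Fin 2) R}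
    (h : ∀ (m : ℕ) b, eval ![(m : R), b] P = 0) : P = 0 := by
  refine funext_set ![Set.range Nat.cast, Set.univ]
    (fun i => by
      fin_cases i
      exacts [Set.infinite_range_of_injective Nat.cast_injective, Set.infinite_univ])
    fun x hx => ?_
  obtain ⟨m, hm⟩ := hx 0 trivial
  have hx' : x = ![(m : R), x 1] := by
    ext i
    fin_cases i <;> simp [hm]
  rw [hx', h, map_zero]

theorem sum_eval_mul_eq_sum_ite_mul {σ α : Type*} [DecidableEq α] {U W : Finset α}
    (hUW : U ⊆ W) (q : α → MvPolynomial σ R) (x : σ → R) (c : α → R) :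
    ∑ v ∈ U, eval x (q v) * c v = ∑ v ∈ W, eval x (if v ∈ U then q v else 0) * c v := by
  rw [← sum_subset hUW fun v _ hv => by rw [if_neg hv, map_zero, zero_mul]]
  exact sum_congr rfl fun v hv => by rw [if_pos hv]

end MvPolynomial

theorem Nat.le_two_mul_div_of_mul_le {u t N : ℕ} (ht : 0 < t) (h : u * t ≤ 2 * N) :
    u ≤ 2 * (N / ((t + 1) / 2)) := by
  set r := (t + 1) / 2
  set q := N / r
  have hN : N < r * (q + 1) := Nat.lt_mul_div_succ N (by omega)
  by_contra! hu
  have h1 : (2 * q + 1) * t ≤ u * t := Nat.mul_le_mul_right t hu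
  have h2 : (2 * q + 1) * (2 * r) ≤ (2 * q + 1) * (t + 1) := Nat.mul_le_mul_left _ (by omega)
  have h3 : q * 1 ≤ q * r := Nat.mul_le_mul_left q (by omega)
  nlinarith

theorem mem_sampSet {N D m n : ℕ} :
    (m, n) ∈ sampSet N D ↔ ∃ r ∈ Icc 1 N, m ≤ 2 * (N / r) * D ∧ n ≤ 2 * r * D := by
  simp [sampSet]

section Bivariate

variable {R ι : Type*} [CommRing R] [IsDomain R] [CharZero R] [DecidableEq R] [DecidableEq ι]
  {N D : ℕ} {W : Finset ι} {z : ι → R × R} {P : ι → MvPolynomial (Fin 2) R}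

theorem eq_zero_of_fst_eq_of_card_fiber_le (hz : Set.InjOn z W)
    (hz0 : ∀ v ∈ W, (z v).1 ≠ 0 ∧ (z v).2 ≠ 0) (hW : #W ≤ 2 * N)
    (hP : ∀ v ∈ W, ∀ i, (P v).degreeOf i < D)
    (h : ∀ m n : ℕ, (m, n) ∈ sampSet N D →
      ∑ v ∈ W, MvPolynomial.eval ![(m : R), n] (P v) * ((z v).1 ^ m * (z v).2 ^ n) = 0)
    {a : R} (hmin : ∀ v ∈ W, #{u ∈ W | (z u).1 = a} ≤ #{u ∈ W | (z u).1 = (z v).1}) :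
    ∀ v ∈ W, (z v).1 = a → P v = 0 := by
  intro v₀ hv₀ hv₀a
  set F := {u ∈ W | (z u).1 = a}
  set r := (#F + 1) / 2
  have hF : 0 < #F := card_pos.mpr ⟨v₀, mem_filter.mpr ⟨hv₀, hv₀a⟩⟩
  have hcard : #(W.image fun u => (z u).1) * #F ≤ 2 * N := by
    calc #(W.image fun u => (z u).1) * #F
        = ∑ b ∈ W.image fun u => (z u).1, #F := by rw [sum_const, smul_eq_mul]
      _ ≤ ∑ b ∈ W.image fun u => (z u).1, #{u ∈ W | (z u).1 = b} := sum_le_sum fun b hb => by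
          obtain ⟨v, hv, rfl⟩ := mem_image.mp hb
          exact hmin v hv
      _ = #W := (card_eq_sum_card_image _ W).symm
      _ ≤ 2 * N := hW
  have hrN : r ∈ Icc 1 N :=
    mem_Icc.mpr ⟨by omega, by have : #F ≤ #W := card_filter_le W _; omega⟩
  have hrow : ∀ n ≤ 2 * r * D, ∀ m : ℕ,
      ∑ u ∈ F, MvPolynomial.eval ![(m : R), n] (P u) * (z u).2 ^ n = 0 := by
    intro n hn m
    choose Q hQdeg hQ using fun u => (P u).exists_natDegree_le_degreeOf_zero_eval_eq (n : R)
    have hsum := Polynomial.sum_filter_eq_zero_of_sum_eval_mul_pow_eq_zero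
      (s := W) (z := fun u => (z u).1) (D := D) (q := fun u => (z u).2 ^ n • Q u)
      (fun u hu => (hz0 u hu).1) (fun u hu => ?_) (fun m hm => ?_) a
    · simpa [Polynomial.eval_finsetSum, hQ, mul_comm] using
        congrArg (Polynomial.eval (m : R)) hsum
    · exact (Polynomial.degree_smul_le _ _).trans_lt <| Polynomial.degree_le_natDegree.trans_lt <|
        by exact_mod_cast (hQdeg u).trans_lt (hP u hu 0)
    · have hm' : m ≤ 2 * (N / r) * D :=
        hm.le.trans (Nat.mul_le_mul_right D (Nat.le_two_mul_div_of_mul_le hF hcard))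
      rw [← h m n (mem_sampSet.mpr ⟨r, hrN, hm', hn⟩)]
      refine sum_congr rfl fun u _ => ?_
      simp only [Polynomial.eval_smul, hQ, smul_eq_mul]
      ring
  have hcol : ∀ m : ℕ, ∀ u ∈ F, ∀ b, MvPolynomial.eval ![(m : R), b] (P u) = 0 := by
    intro m
    choose Q hQdeg hQ using fun u => (P u).exists_natDegree_le_degreeOf_one_eval_eq (m : R)
    have hQ0 := Polynomial.eq_zero_of_sum_eval_mul_pow_eq_zero (s := F) (z := fun u => (z u).2)
      (d := fun _ => D) (q := Q) ?_ (fun u hu => (hz0 u (mem_filter.mp hu).1).2) (fun u hu => ?_)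
      (fun n hn => ?_)
    · intro u hu b
      rw [← hQ, hQ0 u hu, Polynomial.eval_zero]
    · intro u hu u' hu' huu'
      refine hz (mem_filter.mp hu).1 (mem_filter.mp hu').1 (Prod.ext ?_ huu')
      rw [(mem_filter.mp hu).2, (mem_filter.mp hu').2]
    · exact Polynomial.degree_le_natDegree.trans_lt <|
        by exact_mod_cast (hQdeg u).trans_lt (hP u (mem_filter.mp hu).1 1)
    · rw [sum_const, smul_eq_mul] at hn
      have hFr : #F ≤ 2 * r := by omega
      simpa [hQ] using hrow n (hn.le.trans (Nat.mul_le_mul_right D hFr)) m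
  exact MvPolynomial.eq_zero_of_eval_natCast_eq_zero fun m b =>
    hcol m v₀ (mem_filter.mpr ⟨hv₀, hv₀a⟩) b

theorem eq_zero_of_sum_eval_mul_pow_eq_zero_on_sampSet (hz : Set.InjOn z W)
    (hz0 : ∀ v ∈ W, (z v).1 ≠ 0 ∧ (z v).2 ≠ 0) (hW : #W ≤ 2 * N)
    (hP : ∀ v ∈ W, ∀ i, (P v).degreeOf i < D)
    (h : ∀ m n : ℕ, (m, n) ∈ sampSet N D →
      ∑ v ∈ W, MvPolynomial.eval ![(m : R), n] (P v) * ((z v).1 ^ m * (z v).2 ^ n) = 0) :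
    ∀ v ∈ W, P v = 0 := by
  induction W using Finset.strongInduction with
  | H W ih =>
  rcases W.eq_empty_or_nonempty with rfl | hne
  · simp
  obtain ⟨a, ha, hmin⟩ := (W.image fun v => (z v).1).exists_min_image
    (fun a => #{u ∈ W | (z u).1 = a}) (hne.image _)
  have hfiber := eq_zero_of_fst_eq_of_card_fiber_le hz hz0 hW hP h
    fun v hv => hmin _ (mem_image_of_mem _ hv)
  obtain ⟨v₀, hv₀, hv₀a⟩ := mem_image.mp ha
  have hrest : ∀ v ∈ W.filter fun v => (z v).1 ≠ a, P v = 0 := by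
    refine ih _ (filter_ssubset.mpr ⟨v₀, hv₀, not_not.mpr hv₀a⟩) (hz.mono (filter_subset _ _))
      (fun v hv => hz0 v (mem_filter.mp hv).1) ((card_filter_le _ _).trans hW)
      (fun v hv => hP v (mem_filter.mp hv).1) fun m n hmn => ?_
    rw [sum_filter_of_ne fun v hv hne => ?_]
    · exact h m n hmn
    · exact fun hva => hne (by rw [hfiber v hv hva, map_zero, zero_mul])
  intro v hv
  by_cases hva : (z v).1 = a
  · exact hfiber v hv hva
  · exact hrest v (mem_filter.mpr ⟨hv, hva⟩)

end Bivariate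

noncomputable def expTwoPiI (x : ℝ) : ℂ := Complex.exp (2 * Real.pi * Complex.I * x)

theorem expTwoPiI_eq_toCircle (x : ℝ) :
    expTwoPiI x = AddCircle.toCircle (x : AddCircle (1 : ℝ)) := by
  rw [AddCircle.toCircle_apply_mk, Circle.coe_exp, expTwoPiI]
  push_cast
  ring_nf

theorem injOn_expTwoPiI : Set.InjOn expTwoPiI (Set.Ico 0 1) := by
  intro x hx y hy hxy
  rw [expTwoPiI_eq_toCircle, expTwoPiI_eq_toCircle] at hxy
  rw [← zero_add (1 : ℝ)] at hx hy
  exact (AddCircle.coe_eq_coe_iff_of_mem_Ico hx hy).mp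
    (AddCircle.injective_toCircle one_ne_zero (Circle.ext hxy))

theorem cexp_two_pi_I_mul_natCast (x y : ℝ) (m n : ℕ) :
    Complex.exp (2 * Real.pi * Complex.I * (x * m + y * n)) =
      expTwoPiI x ^ m * expTwoPiI y ^ n := by
  rw [expTwoPiI, expTwoPiI, ← Complex.exp_nat_mul, ← Complex.exp_nat_mul, ← Complex.exp_add]
  ring_nf

theorem IsExpPoly2.eq_of_eq_on_sampSet {N D : ℕ} (hD : 0 < D) {f f' : ℝ → ℝ → ℂ}
    {V V' : Finset (ℝ × ℝ)} (hf : IsExpPoly2 N D f V) (hf' : IsExpPoly2 N D f' V')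
    (h : ∀ mn ∈ sampSet N D, f mn.1 mn.2 = f' mn.1 mn.2) : f = f' := by
  classical
  obtain ⟨p, hVN, hV, -, hpD, hfp⟩ := hf
  obtain ⟨p', hVN', hV', -, hpD', hfp'⟩ := hf'
  set W := V ∪ V'
  have hdeg : ∀ (U : Finset (ℝ × ℝ)) (q : ℝ × ℝ → MvPolynomial (Fin 2) ℂ),
      (∀ v ∈ U, ∀ i, (q v).degreeOf i < D) → ∀ v i, (if v ∈ U then q v else 0).degreeOf i < D := by
    intro U q hq v i
    split_ifs with hv
    exacts [hq v hv i, by simpa using hD]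
  have hP := eq_zero_of_sum_eval_mul_pow_eq_zero_on_sampSet (N := N) (W := W)
    (z := fun v => (expTwoPiI v.1, expTwoPiI v.2))
    (P := fun v => (if v ∈ V then p v else 0) - (if v ∈ V' then p' v else 0))
    (injOn_expTwoPiI.prodMap injOn_expTwoPiI |>.mono fun v hv => ?_)
    (fun v _ => ⟨Complex.exp_ne_zero _, Complex.exp_ne_zero _⟩)
    ((card_union_le V V').trans (by omega))
    (fun v _ i => (MvPolynomial.degreeOf_sub_le i _ _).trans_lt
      (max_lt (hdeg V p hpD v i) (hdeg V' p' hpD' v i)))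
    (fun m n hmn => ?_)
  · funext ξ η
    rw [hfp, hfp', MvPolynomial.sum_eval_mul_eq_sum_ite_mul (subset_union_left : V ⊆ W),
      MvPolynomial.sum_eval_mul_eq_sum_ite_mul (subset_union_right : V' ⊆ W)]
    exact sum_congr rfl fun v hv => by rw [sub_eq_zero.mp (hP v hv)]
  · rcases mem_union.mp hv with hv | hv
    exacts [hV v hv, hV' v hv]
  · have hfg := h (m, n) hmn
    rw [hfp, hfp', MvPolynomial.sum_eval_mul_eq_sum_ite_mul (subset_union_left : V ⊆ W),
      MvPolynomial.sum_eval_mul_eq_sum_ite_mul (subset_union_right : V' ⊆ W), ← sub_eq_zero,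
      ← sum_sub_distrib] at hfg
    rw [← hfg]
    refine sum_congr rfl fun v _ => ?_
    simp only [cexp_two_pi_I_mul_natCast, Complex.ofReal_natCast, map_sub, sub_mul]

theorem exp_poly_finitely_many_given_projection_set_general (N D : ℕ) (hD : 0 < D)
    (X : Set ℝ)
    (g : ℕ × ℕ → ℂ) :
    {f : ℝ → ℝ → ℂ | ∃ V : Finset (ℝ × ℝ), IsExpPoly2 N D f V ∧
      Prod.fst '' (V : Set (ℝ × ℝ)) = X ∧
      ∀ mn ∈ sampSet N D, f (mn.1 : ℝ) (mn.2 : ℝ) = g mn}.Finite := by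
  refine Set.Subsingleton.finite ?_
  rintro f ⟨V, hf, -, hfg⟩ f' ⟨V', hf', -, hf'g⟩
  exact hf.eq_of_eq_on_sampSet hD hf' fun mn hmn => (hfg mn hmn).trans (hf'g mn hmn).symm

/-- Given `N`, `D`, a finite set `X ⊆ [0,1)` and prescribed sample values
`g` on the sampling set `A_N(D)`, there are at most finitely many bivariate exponential
polynomials with at most `N` terms, pairwise distinct frequencies in `[0,1)²` and nonzero
coefficients of degree `< D`, whose frequency set projects onto the first coordinate exactly
to `X`, and whose values on `A_N(D)` are given by `g`. -/
theorem exp_poly_finitely_many_given_projection_set (N D : ℕ) (hN : 0 < N) (hD : 0 < D)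
    (X : Set ℝ) (hXfin : X.Finite) (hX : X ⊆ Set.Ico (0 : ℝ) 1)
    (g : ℕ × ℕ → ℂ) :
    {f : ℝ → ℝ → ℂ | ∃ V : Finset (ℝ × ℝ), IsExpPoly2 N D f V ∧
      Prod.fst '' (V : Set (ℝ × ℝ)) = X ∧
      ∀ mn ∈ sampSet N D, f (mn.1 : ℝ) (mn.2 : ℝ) = g mn}.Finite :=
  exp_poly_finitely_many_given_projection_set_general N D hD X g
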